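/- arXiv:1309.6389 — 4 statements merged into one kernel-verified Lean document; each statement's English description precedes it below -/
import Mathlib

section
/- Let a < b be real numbers and let f : [a,b] → ℂ have a continuous derivative on [a,b]. Then for every u ∈ [a,b], |f(u)| ≤ (1/(b−a)) ∫_a^b |f(x)| dx + ∫_a^b |f'(x)| dx. -/
/-!
By the fundamental theorem of calculus, `‖f u‖ ≤ ‖f x‖ + ∫_a^b ‖f'‖` for every `x ∈ [a,b]`;
averaging this over `x ∈ [a,b]` gives the inequality.
-/

open Set MeasureTheory intervalIntegral
open scoped Interval

section

variable {E : Type*} [NormedAddCommGroup E] [NormedSpace ℝ E] [CompleteSpace E]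
  {f f' : ℝ → E} {a b : ℝ}

theorem integral_eq_sub_of_hasDerivWithinAt_uIcc
    (hderiv : ∀ x ∈ uIcc a b, HasDerivWithinAt f (f' x) (uIcc a b) x)
    (hint : IntervalIntegrable f' volume a b) :
    ∫ t in a..b, f' t = f b - f a :=
  integral_eq_sub_of_hasDeriv_right (fun x hx => (hderiv x hx).continuousWithinAt)
    (fun _ ht => ((hderiv _ (Ioo_subset_Icc_self ht)).hasDerivAt
      (Icc_mem_nhds ht.1 ht.2)).hasDerivWithinAt) hint

theorem norm_sub_le_integral_norm_deriv
    (hderiv : ∀ x ∈ Icc a b, HasDerivWithinAt f (f' x) (Icc a b) x)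
    (hint : IntervalIntegrable f' volume a b) {x u : ℝ} (hx : x ∈ Icc a b) (hu : u ∈ Icc a b) :
    ‖f u - f x‖ ≤ ∫ t in a..b, ‖f' t‖ := by
  have hsub : uIcc x u ⊆ Icc a b := uIcc_subset_Icc hx hu
  have hab : a ≤ b := hx.1.trans hx.2
  rw [← integral_eq_sub_of_hasDerivWithinAt_uIcc
    (fun t ht => (hderiv t (hsub ht)).mono hsub) (hint.mono_set (by rwa [uIcc_of_le hab]))]
  calc ‖∫ t in x..u, f' t‖ ≤ ∫ t in Ι x u, ‖f' t‖ := norm_integral_le_integral_norm_uIoc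
    _ ≤ ∫ t in Ioc a b, ‖f' t‖ :=
      setIntegral_mono_set hint.norm.1 (.of_forall fun _ => norm_nonneg _)
        (show Ι x u ⊆ Ioc a b from
          Ioc_subset_Ioc (le_min hx.1 hu.1) (max_le hx.2 hu.2)).eventuallyLE
    _ = ∫ t in a..b, ‖f' t‖ := (integral_of_le hab).symm

end

theorem le_inv_mul_integral_of_le_on {g : ℝ → ℝ} {a b c : ℝ} (hab : a < b)
    (hg : IntervalIntegrable g volume a b) (h : ∀ x ∈ Icc a b, c ≤ g x) :
    c ≤ (b - a)⁻¹ * ∫ x in a..b, g x := by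
  rw [le_inv_mul_iff₀ (sub_pos.2 hab)]
  calc (b - a) * c = ∫ _ in a..b, c := by simp
    _ ≤ ∫ x in a..b, g x := integral_mono_on hab.le intervalIntegrable_const hg h

/-- Sobolev–Gallagher inequality: if `f` is continuously differentiable on `[a,b]`
(with derivative `f'`), then for every `u ∈ [a,b]`,
`|f(u)| ≤ (b-a)⁻¹ ∫_a^b |f| + ∫_a^b |f'|`. -/
theorem statement_3 (a b : ℝ) (hab : a < b) (f f' : ℝ → ℂ)
    (hderiv : ∀ x ∈ Set.Icc a b, HasDerivWithinAt f (f' x) (Set.Icc a b) x)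
    (hcont : ContinuousOn f' (Set.Icc a b)) :
    ∀ u ∈ Set.Icc a b,
      ‖f u‖ ≤ (1 / (b - a)) * ∫ x in a..b, ‖f x‖
        + ∫ x in a..b, ‖f' x‖ := by
  intro u hu
  have hf'int : IntervalIntegrable f' volume a b :=
    hcont.intervalIntegrable_of_Icc hab.le
  have hfint : IntervalIntegrable (fun x => ‖f x‖ + ∫ t in a..b, ‖f' t‖) volume a b :=
    ((ContinuousOn.norm fun x hx => (hderiv x hx).continuousWithinAt).intervalIntegrable_of_Icc
      hab.le).add intervalIntegrable_const
  -- The binder of the first integral extends to the end of the line, so the right-hand side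
  -- is the average of `x ↦ ‖f x‖ + ∫_a^b ‖f'‖`.
  rw [one_div]
  refine le_inv_mul_integral_of_le_on hab hfint fun x hx => ?_
  linarith [norm_sub_norm_le (f u) (f x), norm_sub_le_integral_norm_deriv hderiv hf'int hx hu]
end

section
/- Let F(x) = L x² + M x + N be a real quadratic polynomial with L ≠ 0, and suppose F has two distinct (complex) roots α₁ ≠ α₂. Then for every ε > 0, the Lebesgue measure of the set { x ∈ ℝ : |F(x)| ≤ ε } is at most 8ε / (|L| · |α₁ − α₂|). -/
/-!
Over `ℂ`, `|F(x)| = |L| ‖x - α₁‖ ‖x - α₂‖`. The two distances sum to at least `‖α₁ - α₂‖`,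
so the larger is at least half of it and the smaller is at most `2ε / (|L| ‖α₁ - α₂‖)`.
Since `|x - Re α| ≤ ‖x - α‖`, the sublevel set lies in two intervals of that radius
around `Re α₁` and `Re α₂`, of total length at most `8ε / (|L| ‖α₁ - α₂‖)`.
-/

open MeasureTheory Metric

lemma min_dist_mul_dist_le {X : Type*} [PseudoMetricSpace X] (x p q : X) :
    min (dist x p) (dist x q) * dist p q ≤ 2 * (dist x p * dist x q) := by
  have htri : dist p q ≤ dist x p + dist x q := dist_triangle_left p q x
  rcases le_total (dist x p) (dist x q) with h | h
  · rw [min_eq_left h]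
    nlinarith [dist_nonneg (x := x) (y := p)]
  · rw [min_eq_right h]
    nlinarith [dist_nonneg (x := x) (y := q)]

lemma Complex.abs_ofReal_sub_re_le_dist (x : ℝ) (z : ℂ) : |x - z.re| ≤ dist (x : ℂ) z := by
  simpa [dist_eq_norm] using Complex.abs_re_le_norm ((x : ℂ) - z)

lemma mem_closedBall_re_union_of_mul_dist_mul_dist_le {c ε : ℝ} (hc : 0 < c) {α₁ α₂ : ℂ}
    (hα : α₁ ≠ α₂) {x : ℝ} (hx : c * (dist (x : ℂ) α₁ * dist (x : ℂ) α₂) ≤ ε) :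
    x ∈ closedBall α₁.re (2 * ε / (c * dist α₁ α₂)) ∪
      closedBall α₂.re (2 * ε / (c * dist α₁ α₂)) := by
  have hmin : min (dist (x : ℂ) α₁) (dist (x : ℂ) α₂) ≤ 2 * ε / (c * dist α₁ α₂) := by
    rw [le_div_iff₀ (mul_pos hc (dist_pos.mpr hα))]
    nlinarith [min_dist_mul_dist_le (x : ℂ) α₁ α₂]
  rcases min_le_iff.mp hmin with h | h
  · exact Or.inl ((Complex.abs_ofReal_sub_re_le_dist x α₁).trans h)
  · exact Or.inr ((Complex.abs_ofReal_sub_re_le_dist x α₂).trans h)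

lemma Real.volume_closedBall_union_closedBall_le (a b r : ℝ) :
    volume (closedBall a r ∪ closedBall b r) ≤ ENNReal.ofReal (4 * r) := by
  calc volume (closedBall a r ∪ closedBall b r)
      ≤ volume (closedBall a r) + volume (closedBall b r) := measure_union_le _ _
    _ = ENNReal.ofReal 2 * ENNReal.ofReal (2 * r) := by
        rw [Real.volume_closedBall, Real.volume_closedBall, ENNReal.ofReal_ofNat, ← two_mul]
    _ = ENNReal.ofReal (4 * r) := by
        rw [← ENNReal.ofReal_mul zero_le_two]
        ring_nf

lemma abs_quadratic_eq_mul_dist_mul_dist {L M N : ℝ} {α₁ α₂ : ℂ}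
    (hroots : ∀ x : ℂ, (L : ℂ) * x ^ 2 + (M : ℂ) * x + (N : ℂ)
      = (L : ℂ) * (x - α₁) * (x - α₂)) (x : ℝ) :
    |L * x ^ 2 + M * x + N| = |L| * (dist (x : ℂ) α₁ * dist (x : ℂ) α₂) := by
  calc |L * x ^ 2 + M * x + N| = ‖((L * x ^ 2 + M * x + N : ℝ) : ℂ)‖ := by
        rw [Complex.norm_real, Real.norm_eq_abs]
    _ = ‖(L : ℂ) * (x - α₁) * (x - α₂)‖ := by
        rw [← hroots]
        norm_cast
    _ = |L| * (dist (x : ℂ) α₁ * dist (x : ℂ) α₂) := by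
        rw [norm_mul, norm_mul, Complex.norm_real, Real.norm_eq_abs, dist_eq_norm,
          dist_eq_norm, mul_assoc]

theorem statement_4_general (L M N : ℝ) (hL : L ≠ 0) (α₁ α₂ : ℂ) (hα : α₁ ≠ α₂)
    (hroots : ∀ x : ℂ, (L : ℂ) * x ^ 2 + (M : ℂ) * x + (N : ℂ)
      = (L : ℂ) * (x - α₁) * (x - α₂)) (ε : ℝ) :
    MeasureTheory.volume {x : ℝ | |L * x ^ 2 + M * x + N| ≤ ε}
      ≤ ENNReal.ofReal (8 * ε / (|L| * ‖α₁ - α₂‖)) := by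
  set r := 2 * ε / (|L| * dist α₁ α₂)
  have hsub : {x : ℝ | |L * x ^ 2 + M * x + N| ≤ ε} ⊆
      closedBall α₁.re r ∪ closedBall α₂.re r := fun x hx =>
    mem_closedBall_re_union_of_mul_dist_mul_dist_le (abs_pos.mpr hL) hα
      (abs_quadratic_eq_mul_dist_mul_dist hroots x ▸ hx)
  calc volume {x : ℝ | |L * x ^ 2 + M * x + N| ≤ ε}
      ≤ volume (closedBall α₁.re r ∪ closedBall α₂.re r) := measure_mono hsub
    _ ≤ ENNReal.ofReal (4 * r) := Real.volume_closedBall_union_closedBall_le _ _ _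
    _ = ENNReal.ofReal (8 * ε / (|L| * ‖α₁ - α₂‖)) := by
        simp only [r, dist_eq_norm]
        congr 1
        ring

/-- If `F(x) = Lx² + Mx + N` is a real quadratic with `L ≠ 0` and distinct complex
roots `α₁ ≠ α₂`, then `μ({x : |F(x)| ≤ ε}) ≤ 8ε / (|L| |α₁ - α₂|)`. -/
theorem statement_4 (L M N : ℝ) (hL : L ≠ 0) (α₁ α₂ : ℂ) (hα : α₁ ≠ α₂)
    (hroots : ∀ x : ℂ, (L : ℂ) * x ^ 2 + (M : ℂ) * x + (N : ℂ)
      = (L : ℂ) * (x - α₁) * (x - α₂)) (ε : ℝ) (hε : 0 < ε) :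
    MeasureTheory.volume {x : ℝ | |L * x ^ 2 + M * x + N| ≤ ε}
      ≤ ENNReal.ofReal (8 * ε / (|L| * ‖α₁ - α₂‖)) :=
  statement_4_general L M N hL α₁ α₂ hα hroots ε
end

section
/- For every K > 0 there is a constant C(K) > 0 with the following property. Let A, B, V, t be real numbers with 0 ≤ A < B, B ≤ K·V, V ≥ 1, t ≥ 1, and let v₁, v₂, v₃, v₄ be integers with V/2 < vᵢ ≤ V for each i, (v₁−v₃)(v₁−v₄)(v₂−v₃)(v₂−v₄) ≠ 0, and v₁ + v₂ = v₃ + v₄. Set F(x) = (x+v₁)(x+v₂) / ((x+v₃)(x+v₄)). Then |∫_A^B F(x)^{it} dx| ≤ C(K) · V⁴ / (t · |(v₁−v₄)(v₂−v₄)|). -/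
/-!
With `φ = t log F` the integrand is `exp (i φ)`, and `φ' = t (1/a + 1/b - 1/c - 1/d)` for
`a, b, c, d = x + v₁, x + v₂, x + v₃, x + v₄`. The balance `a + b = c + d` makes this factor as
`-t (a + b)(a - d)(b - d) / (a b c d)`, so `|φ'| ≥ t V |D| / ((K + 1) V)⁴` on `[A, B]` with
`D = (v₁ - v₄)(v₂ - v₄)`, while `|φ''| ≤ 32 t (K + 1) V |v₂ - v₄| / V⁴`. One integration by parts
bounds an oscillatory integral by `2 / λ + (B - A) M / λ²` when `|φ'| ≥ λ` and `|φ''| ≤ M`; since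
`B - A ≤ K V` and `|v₂ - v₄| ≤ |D|` for integers, both terms are `O_K(V⁴ / (t |D|))`.
-/

open Complex intervalIntegral Set

section OscillatoryIntegral

variable {φ φ' φ'' : ℝ → ℝ} {a b : ℝ}

theorem hasDerivAt_exp_mul_I_div {x : ℝ} (hφ : HasDerivAt φ (φ' x) x)
    (hφ' : HasDerivAt φ' (φ'' x) x) (hne : φ' x ≠ 0) :
    HasDerivAt (fun y ↦ exp (φ y * I) / (φ' y * I))
      (exp (φ x * I) + exp (φ x * I) * I * (φ'' x / φ' x ^ 2 : ℝ)) x := by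
  have he : HasDerivAt (fun y ↦ exp (φ y * I)) (exp (φ x * I) * (φ' x * I)) x :=
    (hφ.ofReal_comp.mul_const I).cexp
  have hd : HasDerivAt (fun y ↦ (φ' y : ℂ) * I) (φ'' x * I) x := hφ'.ofReal_comp.mul_const I
  have hne' : (φ' x : ℂ) ≠ 0 := ofReal_ne_zero.2 hne
  refine (he.div hd (mul_ne_zero hne' I_ne_zero)).congr_deriv ?_
  push_cast
  field_simp
  ring_nf
  simp only [I_sq]
  ring

theorem integral_exp_mul_I_eq (hab : a ≤ b) (hφ : ∀ x ∈ Icc a b, HasDerivAt φ (φ' x) x)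
    (hφ' : ∀ x ∈ Icc a b, HasDerivAt φ' (φ'' x) x) (hφ'' : ContinuousOn φ'' (Icc a b))
    (hne : ∀ x ∈ Icc a b, φ' x ≠ 0) :
    ∫ x in a..b, exp (φ x * I) =
      exp (φ b * I) / (φ' b * I) - exp (φ a * I) / (φ' a * I) -
        ∫ x in a..b, exp (φ x * I) * I * (φ'' x / φ' x ^ 2 : ℝ) := by
  have hexp : ContinuousOn (fun x ↦ exp (φ x * I)) (Icc a b) :=
    continuous_exp.comp_continuousOn
      ((continuous_ofReal.comp_continuousOn fun x hx ↦ (hφ x hx).continuousAt.continuousWithinAt).mul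
        continuousOn_const)
  have hφ'c : ContinuousOn φ' (Icc a b) := fun x hx ↦ (hφ' x hx).continuousAt.continuousWithinAt
  have hrem : ContinuousOn (fun x ↦ exp (φ x * I) * I * (φ'' x / φ' x ^ 2 : ℝ)) (Icc a b) :=
    (hexp.mul continuousOn_const).mul (continuous_ofReal.comp_continuousOn
      (hφ''.div (hφ'c.pow 2) fun x hx ↦ pow_ne_zero 2 (hne x hx)))
  rw [← uIcc_of_le hab] at hexp hrem
  have hparts := integral_eq_sub_of_hasDerivAt
    (fun x hx ↦ hasDerivAt_exp_mul_I_div (hφ x (uIcc_of_le hab ▸ hx))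
      (hφ' x (uIcc_of_le hab ▸ hx)) (hne x (uIcc_of_le hab ▸ hx)))
    (hexp.intervalIntegrable.add hrem.intervalIntegrable)
  rw [← hparts, integral_add hexp.intervalIntegrable hrem.intervalIntegrable]
  ring

theorem norm_integral_exp_mul_I_le {c M : ℝ} (hab : a ≤ b) (hc : 0 < c)
    (hφ : ∀ x ∈ Icc a b, HasDerivAt φ (φ' x) x) (hφ' : ∀ x ∈ Icc a b, HasDerivAt φ' (φ'' x) x)
    (hφ'' : ContinuousOn φ'' (Icc a b)) (hlow : ∀ x ∈ Icc a b, c ≤ |φ' x|)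
    (hup : ∀ x ∈ Icc a b, |φ'' x| ≤ M) :
    ‖∫ x in a..b, exp (φ x * I)‖ ≤ 2 / c + (b - a) * M / c ^ 2 := by
  have hne : ∀ x ∈ Icc a b, φ' x ≠ 0 := fun x hx h ↦ by
    have := hlow x hx; rw [h, abs_zero] at this; linarith
  have hbdry : ∀ x ∈ Icc a b, ‖exp (φ x * I) / (φ' x * I)‖ ≤ 1 / c := fun x hx ↦ by
    rw [norm_div, norm_exp_ofReal_mul_I, norm_mul, norm_I, mul_one, norm_real, Real.norm_eq_abs]
    exact one_div_le_one_div_of_le hc (hlow x hx)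
  have hrem : ‖∫ x in a..b, exp (φ x * I) * I * (φ'' x / φ' x ^ 2 : ℝ)‖ ≤ M / c ^ 2 * |b - a| := by
    refine norm_integral_le_of_norm_le_const fun x hx ↦ ?_
    have hx : x ∈ Icc a b := Ioc_subset_Icc_self (uIoc_of_le hab ▸ hx)
    rw [norm_mul, norm_mul, norm_exp_ofReal_mul_I, norm_I, one_mul, one_mul, norm_real,
      Real.norm_eq_abs, abs_div, abs_pow]
    exact div_le_div₀ ((abs_nonneg _).trans (hup x hx)) (hup x hx) (by positivity)
      (pow_le_pow_left₀ hc.le (hlow x hx) 2)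
  rw [abs_of_nonneg (sub_nonneg.2 hab)] at hrem
  rw [integral_exp_mul_I_eq hab hφ hφ' hφ'' hne]
  calc _ ≤ ‖exp (φ b * I) / (φ' b * I)‖ + ‖exp (φ a * I) / (φ' a * I)‖ +
        ‖∫ x in a..b, exp (φ x * I) * I * (φ'' x / φ' x ^ 2 : ℝ)‖ :=
        (norm_sub_le _ _).trans (add_le_add_left (norm_sub_le _ _) _)
    _ ≤ 1 / c + 1 / c + M / c ^ 2 * (b - a) :=
        add_le_add (add_le_add (hbdry b ⟨hab, le_rfl⟩) (hbdry a ⟨le_rfl, hab⟩)) hrem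
    _ = 2 / c + (b - a) * M / c ^ 2 := by ring

end OscillatoryIntegral

section BalancedQuadruple

variable {a b c d V L : ℝ}

theorem inv_add_inv_sub_inv_sub_inv_of_add_eq (ha : a ≠ 0) (hb : b ≠ 0) (hc : c ≠ 0)
    (hd : d ≠ 0) (h : a + b = c + d) :
    a⁻¹ + b⁻¹ - c⁻¹ - d⁻¹ = -((a + b) * ((a - d) * (b - d))) / (a * b * c * d) := by
  obtain rfl : c = a + b - d := by linarith
  field_simp
  ring

theorem inv_sq_add_inv_sq_sub_inv_sq_sub_inv_sq_of_add_eq (ha : a ≠ 0) (hb : b ≠ 0)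
    (hc : c ≠ 0) (hd : d ≠ 0) (h : a + b = c + d) :
    (c ^ 2)⁻¹ + (d ^ 2)⁻¹ - (a ^ 2)⁻¹ - (b ^ 2)⁻¹ =
      (d - b) * ((a + c) / (a ^ 2 * c ^ 2) - (b + d) / (b ^ 2 * d ^ 2)) := by
  obtain rfl : c = a + b - d := by linarith
  field_simp
  ring

theorem le_abs_inv_add_inv_sub_inv_sub_inv (ha : a ∈ Ioc (V / 2) L) (hb : b ∈ Ioc (V / 2) L)
    (hc : c ∈ Ioc (V / 2) L) (hd : d ∈ Ioc (V / 2) L) (hV : 0 ≤ V) (h : a + b = c + d) :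
    V * |(a - d) * (b - d)| / L ^ 4 ≤ |a⁻¹ + b⁻¹ - c⁻¹ - d⁻¹| := by
  obtain ⟨ha₀, ha₁⟩ := ha
  obtain ⟨hb₀, hb₁⟩ := hb
  obtain ⟨hc₀, hc₁⟩ := hc
  obtain ⟨hd₀, hd₁⟩ := hd
  have ha : 0 < a := by linarith
  have hb : 0 < b := by linarith
  have hc : 0 < c := by linarith
  have hd : 0 < d := by linarith
  rw [inv_add_inv_sub_inv_sub_inv_of_add_eq ha.ne' hb.ne' hc.ne' hd.ne' h, abs_div, abs_neg,
    abs_mul (a + b), abs_of_pos (add_pos ha hb), abs_of_pos (by positivity : 0 < a * b * c * d)]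
  gcongr
  · linarith
  · have hL : 0 ≤ L := by linarith
    calc a * b * c * d ≤ L * L * L * L := by gcongr
      _ = L ^ 4 := by ring

theorem abs_inv_sq_add_inv_sq_sub_inv_sq_sub_inv_sq_le (ha : a ∈ Ioc (V / 2) L)
    (hb : b ∈ Ioc (V / 2) L) (hc : c ∈ Ioc (V / 2) L) (hd : d ∈ Ioc (V / 2) L) (hV : 0 < V)
    (h : a + b = c + d) :
    |(c ^ 2)⁻¹ + (d ^ 2)⁻¹ - (a ^ 2)⁻¹ - (b ^ 2)⁻¹| ≤ 32 * L * |b - d| / V ^ 4 := by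
  have key : ∀ x ∈ Ioc (V / 2) L, ∀ y ∈ Ioc (V / 2) L,
      0 ≤ (x + y) / (x ^ 2 * y ^ 2) ∧ (x + y) / (x ^ 2 * y ^ 2) ≤ 32 * L / V ^ 4 := by
    rintro x ⟨hx₀, hx₁⟩ y ⟨hy₀, hy₁⟩
    have hx : 0 < x := by linarith
    have hy : 0 < y := by linarith
    refine ⟨by positivity, ?_⟩
    calc (x + y) / (x ^ 2 * y ^ 2) ≤ (2 * L) / ((V / 2) ^ 2 * (V / 2) ^ 2) := by
          gcongr <;> linarith
      _ = 32 * L / V ^ 4 := by field_simp; ring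
  have hpos : ∀ x ∈ Ioc (V / 2) L, x ≠ 0 := fun x hx ↦ by linarith [hx.1]
  obtain ⟨hac₀, hac₁⟩ := key a ha c hc
  obtain ⟨hbd₀, hbd₁⟩ := key b hb d hd
  rw [inv_sq_add_inv_sq_sub_inv_sq_sub_inv_sq_of_add_eq (hpos a ha) (hpos b hb) (hpos c hc)
    (hpos d hd) h, abs_mul, abs_sub_comm d b]
  calc _ ≤ |b - d| * (32 * L / V ^ 4) :=
        mul_le_mul_of_nonneg_left (abs_sub_le_of_nonneg_of_le hac₀ hac₁ hbd₀ hbd₁) (abs_nonneg _)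
    _ = 32 * L * |b - d| / V ^ 4 := by ring

end BalancedQuadruple

section RatioPhase

variable {t w₁ w₂ w₃ w₄ x : ℝ}

theorem ofReal_cpow_mul_I_eq_exp {F : ℝ} (hF : 0 < F) (t : ℝ) :
    (F : ℂ) ^ (I * t) = exp (↑(t * Real.log F) * I) := by
  rw [cpow_def_of_ne_zero (ofReal_ne_zero.2 hF.ne'), ← ofReal_log hF.le]
  push_cast
  ring_nf

theorem log_mul_div_mul {a b c d : ℝ} (ha : 0 < a) (hb : 0 < b) (hc : 0 < c) (hd : 0 < d) :
    Real.log (a * b / (c * d)) = Real.log a + Real.log b - Real.log c - Real.log d := by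
  rw [Real.log_div (by positivity) (by positivity), Real.log_mul ha.ne' hb.ne',
    Real.log_mul hc.ne' hd.ne']
  ring

theorem hasDerivAt_log_ratio_phase (h₁ : 0 < x + w₁) (h₂ : 0 < x + w₂) (h₃ : 0 < x + w₃)
    (h₄ : 0 < x + w₄) :
    HasDerivAt
      (fun y ↦ t * (Real.log (y + w₁) + Real.log (y + w₂) - Real.log (y + w₃) - Real.log (y + w₄)))
      (t * ((x + w₁)⁻¹ + (x + w₂)⁻¹ - (x + w₃)⁻¹ - (x + w₄)⁻¹)) x := by
  have hlog : ∀ {w}, 0 < x + w → HasDerivAt (fun y ↦ Real.log (y + w)) (x + w)⁻¹ x :=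
    fun {w} h ↦ (Real.hasDerivAt_log h.ne').comp_add_const x w
  exact ((((hlog h₁).add (hlog h₂)).sub (hlog h₃)).sub (hlog h₄)).const_mul t

theorem hasDerivAt_inv_ratio_phase (h₁ : x + w₁ ≠ 0) (h₂ : x + w₂ ≠ 0) (h₃ : x + w₃ ≠ 0)
    (h₄ : x + w₄ ≠ 0) :
    HasDerivAt (fun y ↦ t * ((y + w₁)⁻¹ + (y + w₂)⁻¹ - (y + w₃)⁻¹ - (y + w₄)⁻¹))
      (t * (((x + w₃) ^ 2)⁻¹ + ((x + w₄) ^ 2)⁻¹ - ((x + w₁) ^ 2)⁻¹ - ((x + w₂) ^ 2)⁻¹)) x := by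
  have hinv : ∀ {w}, x + w ≠ 0 → HasDerivAt (fun y ↦ (y + w)⁻¹) (-((x + w) ^ 2)⁻¹) x :=
    fun {w} h ↦ (hasDerivAt_inv h).comp_add_const x w
  refine ((((hinv h₁).add (hinv h₂)).sub (hinv h₃)).sub (hinv h₄)).const_mul t |>.congr_deriv ?_
  ring

end RatioPhase

theorem norm_integral_ratio_cpow_le_of_mem {A B V L t w₁ w₂ w₃ w₄ : ℝ} (hAB : A ≤ B) (hV : 0 < V)
    (ht : 0 < t)
    (hw : ∀ x ∈ Icc A B, x + w₁ ∈ Ioc (V / 2) L ∧ x + w₂ ∈ Ioc (V / 2) L ∧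
      x + w₃ ∈ Ioc (V / 2) L ∧ x + w₄ ∈ Ioc (V / 2) L)
    (hD : (w₁ - w₄) * (w₂ - w₄) ≠ 0) (hsum : w₁ + w₂ = w₃ + w₄) :
    ‖∫ x in A..B, (((x + w₁) * (x + w₂) / ((x + w₃) * (x + w₄)) : ℝ) : ℂ) ^ (I * t)‖ ≤
      2 / (t * (V * |(w₁ - w₄) * (w₂ - w₄)| / L ^ 4)) +
        (B - A) * (t * (32 * L * |w₂ - w₄| / V ^ 4)) /
          (t * (V * |(w₁ - w₄) * (w₂ - w₄)| / L ^ 4)) ^ 2 := by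
  have hpos : ∀ x ∈ Icc A B, 0 < x + w₁ ∧ 0 < x + w₂ ∧ 0 < x + w₃ ∧ 0 < x + w₄ := by
    intro x hx
    obtain ⟨h₁, h₂, h₃, h₄⟩ := hw x hx
    exact ⟨(half_pos hV).trans h₁.1, (half_pos hV).trans h₂.1, (half_pos hV).trans h₃.1,
      (half_pos hV).trans h₄.1⟩
  have hL : 0 < L := by
    obtain ⟨⟨h₁, h₁'⟩, -⟩ := hw A ⟨le_rfl, hAB⟩
    linarith
  have hsum' : ∀ x : ℝ, (x + w₁) + (x + w₂) = (x + w₃) + (x + w₄) := fun x ↦ by linarith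
  have hphase : ∫ x in A..B, (((x + w₁) * (x + w₂) / ((x + w₃) * (x + w₄)) : ℝ) : ℂ) ^ (I * t) =
      ∫ x in A..B, exp (↑(t * (Real.log (x + w₁) + Real.log (x + w₂) - Real.log (x + w₃) -
        Real.log (x + w₄))) * I) := by
    refine integral_congr fun x hx ↦ ?_
    obtain ⟨h₁, h₂, h₃, h₄⟩ := hpos x (uIcc_of_le hAB ▸ hx)
    rw [ofReal_cpow_mul_I_eq_exp (by positivity), log_mul_div_mul h₁ h₂ h₃ h₄]
  rw [hphase]
  refine norm_integral_exp_mul_I_le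
    (φ' := fun y ↦ t * ((y + w₁)⁻¹ + (y + w₂)⁻¹ - (y + w₃)⁻¹ - (y + w₄)⁻¹))
    (φ'' := fun y ↦ t * (((y + w₃) ^ 2)⁻¹ + ((y + w₄) ^ 2)⁻¹ - ((y + w₁) ^ 2)⁻¹ - ((y + w₂) ^ 2)⁻¹))
    hAB (by positivity) (fun x hx ↦ ?_) (fun x hx ↦ ?_) ?_ (fun x hx ↦ ?_) (fun x hx ↦ ?_)
  · obtain ⟨h₁, h₂, h₃, h₄⟩ := hpos x hx
    exact hasDerivAt_log_ratio_phase h₁ h₂ h₃ h₄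
  · obtain ⟨h₁, h₂, h₃, h₄⟩ := hpos x hx
    exact hasDerivAt_inv_ratio_phase h₁.ne' h₂.ne' h₃.ne' h₄.ne'
  · refine ContinuousOn.mul continuousOn_const ?_
    have hinv : ∀ {w}, (∀ x ∈ Icc A B, 0 < x + w) →
        ContinuousOn (fun y ↦ ((y + w) ^ 2)⁻¹) (Icc A B) := fun h ↦
      ContinuousOn.inv₀ (by fun_prop) fun x hx ↦ (pow_pos (h x hx) 2).ne'
    exact (((hinv fun x hx ↦ (hpos x hx).2.2.1).add (hinv fun x hx ↦ (hpos x hx).2.2.2)).sub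
      (hinv fun x hx ↦ (hpos x hx).1)).sub (hinv fun x hx ↦ (hpos x hx).2.1)
  · obtain ⟨h₁, h₂, h₃, h₄⟩ := hw x hx
    have := le_abs_inv_add_inv_sub_inv_sub_inv h₁ h₂ h₃ h₄ hV.le (hsum' x)
    simp only [add_sub_add_left_eq_sub] at this
    rw [abs_mul t, abs_of_pos ht]
    exact mul_le_mul_of_nonneg_left this ht.le
  · obtain ⟨h₁, h₂, h₃, h₄⟩ := hw x hx
    have := abs_inv_sq_add_inv_sq_sub_inv_sq_sub_inv_sq_le h₁ h₂ h₃ h₄ hV (hsum' x)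
    simp only [add_sub_add_left_eq_sub] at this
    rw [abs_mul t, abs_of_pos ht]
    exact mul_le_mul_of_nonneg_left this ht.le

theorem norm_integral_ratio_cpow_le {K A B V t w₁ w₂ w₃ w₄ : ℝ} (hA : 0 ≤ A) (hAB : A ≤ B)
    (hB : B ≤ K * V) (hV : 1 ≤ V) (ht : 0 < t) (h₁ : w₁ ∈ Ioc (V / 2) V)
    (h₂ : w₂ ∈ Ioc (V / 2) V) (h₃ : w₃ ∈ Ioc (V / 2) V) (h₄ : w₄ ∈ Ioc (V / 2) V)
    (h₁₄ : 1 ≤ |w₁ - w₄|) (h₂₄ : w₂ ≠ w₄) (hsum : w₁ + w₂ = w₃ + w₄) :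
    ‖∫ x in A..B, (((x + w₁) * (x + w₂) / ((x + w₃) * (x + w₄)) : ℝ) : ℂ) ^ (I * t)‖ ≤
      (2 * (K + 1) ^ 4 + 32 * K * (K + 1) ^ 9) * V ^ 4 / (t * |(w₁ - w₄) * (w₂ - w₄)|) := by
  have hV₀ : 0 < V := by linarith
  have hmem : ∀ w ∈ Ioc (V / 2) V, ∀ x ∈ Icc A B, x + w ∈ Ioc (V / 2) ((K + 1) * V) :=
    fun w hw x hx ↦ ⟨by linarith [hx.1, hw.1], by linarith [hx.2, hw.2]⟩
  have hw₁₄ : w₁ - w₄ ≠ 0 := abs_pos.1 (one_pos.trans_le h₁₄)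
  have hw₂₄ : w₂ - w₄ ≠ 0 := sub_ne_zero.2 h₂₄
  refine (norm_integral_ratio_cpow_le_of_mem hAB hV₀ ht
    (fun x hx ↦ ⟨hmem _ h₁ x hx, hmem _ h₂ x hx, hmem _ h₃ x hx, hmem _ h₄ x hx⟩)
    (mul_ne_zero hw₁₄ hw₂₄) hsum).trans ?_
  have hK : 0 ≤ K := nonneg_of_mul_nonneg_left (hA.trans (hAB.trans hB)) hV₀
  rw [abs_mul]
  calc _ = 2 * (K + 1) ^ 4 * V ^ 3 / (t * (|w₁ - w₄| * |w₂ - w₄|)) +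
        32 * (B - A) * (K + 1) ^ 9 * V ^ 3 / (t * (|w₁ - w₄| * |w₂ - w₄|) * |w₁ - w₄|) := by
        field_simp
    _ ≤ 2 * (K + 1) ^ 4 * V ^ 4 / (t * (|w₁ - w₄| * |w₂ - w₄|)) +
        32 * (K * V) * (K + 1) ^ 9 * V ^ 3 / (t * (|w₁ - w₄| * |w₂ - w₄|) * 1) := by
        gcongr
        · norm_num
        · linarith
    _ = _ := by ring

/-- Oscillatory integral bound (case `v₁+v₂ = v₃+v₄`): for
`F(x) = (x+v₁)(x+v₂)/((x+v₃)(x+v₄))`,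
`|∫_A^B F(x)^{it} dx| ≤ C(K) V⁴ / (t |(v₁-v₄)(v₂-v₄)|)`. -/
theorem statement_6 :
    ∀ K : ℝ, 0 < K → ∃ C : ℝ, 0 < C ∧
      ∀ (A B V t : ℝ) (v₁ v₂ v₃ v₄ : ℤ),
        0 ≤ A → A < B → B ≤ K * V → 1 ≤ V → 1 ≤ t →
        V / 2 < (v₁ : ℝ) → (v₁ : ℝ) ≤ V →
        V / 2 < (v₂ : ℝ) → (v₂ : ℝ) ≤ V →
        V / 2 < (v₃ : ℝ) → (v₃ : ℝ) ≤ V →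
        V / 2 < (v₄ : ℝ) → (v₄ : ℝ) ≤ V →
        (v₁ - v₃) * (v₁ - v₄) * (v₂ - v₃) * (v₂ - v₄) ≠ 0 →
        v₁ + v₂ = v₃ + v₄ →
        ‖(∫ x in A..B,
            ((((x + (v₁ : ℝ)) * (x + (v₂ : ℝ))) / ((x + (v₃ : ℝ)) * (x + (v₄ : ℝ))) : ℝ) : ℂ)
              ^ (Complex.I * t))‖
          ≤ C * V ^ 4 / (t * (|((v₁ - v₄) * (v₂ - v₄) : ℤ)| : ℝ)) := by
  intro K hK
  refine ⟨2 * (K + 1) ^ 4 + 32 * K * (K + 1) ^ 9, by positivity, ?_⟩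
  intro A B V t v₁ v₂ v₃ v₄ hA hAB hB hV ht h₁ h₁' h₂ h₂' h₃ h₃' h₄ h₄' hne hsum
  have h₁₄ : v₁ - v₄ ≠ 0 := fun h ↦ hne (by rw [h]; ring)
  have h₂₄ : v₂ - v₄ ≠ 0 := fun h ↦ hne (by rw [h]; ring)
  rw [Int.cast_mul, Int.cast_sub, Int.cast_sub]
  exact norm_integral_ratio_cpow_le hA hAB.le hB hV (by linarith) ⟨h₁, h₁'⟩ ⟨h₂, h₂'⟩ ⟨h₃, h₃'⟩
    ⟨h₄, h₄'⟩ (by exact_mod_cast Int.one_le_abs h₁₄) (by exact_mod_cast sub_ne_zero.1 h₂₄)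
    (by exact_mod_cast hsum)
end

section
/- For every K > 0 there is a constant C(K) > 0 with the following property. Let A, B, V, t be real numbers with 0 ≤ A < B, B ≤ K·V, V ≥ 1, t ≥ 1, and let v₁, v₄ be integers with V/2 < v₁, v₄ ≤ V and v₁ ≠ v₄. Then |∫_A^B ((x+v₁)/(x+v₄))^{it} dx| ≤ C(K) · V² / (t · |v₁ − v₄|). -/
/-!
Write the integrand as `exp (i φ)` with `φ x = t (log (x + v₁) - log (x + v₄))`, so that
`φ' = t (v₄ - v₁) / ((x + v₁) (x + v₄))` never vanishes. Integrating by parts against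
`h = 1 / φ'` gives `∫ e^{iφ} = -i ([h e^{iφ}] - ∫ h' e^{iφ})`, hence the bound
`|h A| + |h B| + (B - A) sup |h'|`. Here `h` is a quadratic over `t (v₄ - v₁)` and `h'` a linear
function over the same, and all of `x, v₁, v₄` are `O(V)` on `[A, B]` when `B ≤ K V`.
-/
open Complex Set MeasureTheory

section FirstDerivativeTest

variable {φ φ' h h' : ℝ → ℝ} {a b : ℝ}

theorem integral_exp_ofReal_mul_I_eq
    (hφ : ∀ x ∈ uIcc a b, HasDerivAt φ (φ' x) x) (hh : ∀ x ∈ uIcc a b, HasDerivAt h (h' x) x)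
    (hh' : IntervalIntegrable h' volume a b) (hφh : ∀ x ∈ uIcc a b, φ' x * h x = 1) :
    ∫ x in a..b, exp (φ x * I) =
      -I * (h b * exp (φ b * I) - h a * exp (φ a * I) - ∫ x in a..b, h' x * exp (φ x * I)) := by
  have hG : ∀ x ∈ uIcc a b, HasDerivAt (fun y => -I * (h y * exp (φ y * I)))
      (exp (φ x * I) - I * (h' x * exp (φ x * I))) x := by
    intro x hx
    have hφh' : (φ' x : ℂ) * h x = 1 := by exact_mod_cast hφh x hx
    refine ((((hh x hx).ofReal_comp).mul (((hφ x hx).ofReal_comp.mul_const I).cexp)).const_mul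
      (-I)).congr_deriv ?_
    linear_combination exp (φ x * I) * hφh' - h x * φ' x * exp (φ x * I) * I_sq
  have hexp : ContinuousOn (fun x => exp (φ x * I)) (uIcc a b) :=
    continuous_exp.comp_continuousOn <| (continuous_ofReal.comp_continuousOn
      fun x hx => (hφ x hx).continuousAt.continuousWithinAt).mul continuousOn_const
  have hint : IntervalIntegrable (fun x => h' x * exp (φ x * I)) volume a b :=
    IntervalIntegrable.mul_continuousOn ⟨hh'.1.ofReal, hh'.2.ofReal⟩ hexp
  have hFTC := intervalIntegral.integral_eq_sub_of_hasDerivAt hG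
    (hexp.intervalIntegrable.sub (hint.const_mul I))
  rw [intervalIntegral.integral_sub hexp.intervalIntegrable (hint.const_mul I),
    intervalIntegral.integral_const_mul] at hFTC
  linear_combination hFTC

theorem norm_integral_exp_ofReal_mul_I_le {M : ℝ} (hab : a ≤ b)
    (hφ : ∀ x ∈ uIcc a b, HasDerivAt φ (φ' x) x) (hh : ∀ x ∈ uIcc a b, HasDerivAt h (h' x) x)
    (hh' : IntervalIntegrable h' volume a b) (hφh : ∀ x ∈ uIcc a b, φ' x * h x = 1)
    (hM : ∀ x ∈ Ioc a b, |h' x| ≤ M) :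
    ‖∫ x in a..b, exp (φ x * I)‖ ≤ |h a| + |h b| + M * (b - a) := by
  have hrest : ‖∫ x in a..b, h' x * exp (φ x * I)‖ ≤ M * (b - a) := by
    have := intervalIntegral.norm_integral_le_of_norm_le_const (a := a) (b := b) (C := M)
      (f := fun x => h' x * exp (φ x * I)) fun x hx => by
        rw [uIoc_of_le hab] at hx
        simpa [norm_exp_ofReal_mul_I] using hM x hx
    rwa [abs_of_nonneg (sub_nonneg.2 hab)] at this
  rw [integral_exp_ofReal_mul_I_eq hφ hh hh' hφh, norm_mul, norm_neg, norm_I, one_mul]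
  calc _ ≤ ‖(h b : ℂ) * exp (φ b * I)‖ + ‖(h a : ℂ) * exp (φ a * I)‖
          + ‖∫ x in a..b, h' x * exp (φ x * I)‖ :=
        (norm_sub_le _ _).trans (add_le_add_left (norm_sub_le _ _) _)
    _ ≤ |h a| + |h b| + M * (b - a) := by
      simp only [norm_mul, norm_exp_ofReal_mul_I, mul_one, norm_real, Real.norm_eq_abs]
      linarith

end FirstDerivativeTest

theorem ofReal_cpow_I_mul_eq_exp {r : ℝ} (hr : 0 < r) (t : ℝ) :
    (r : ℂ) ^ (I * t) = exp (↑(t * Real.log r) * I) := by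
  rw [cpow_def_of_ne_zero (ofReal_ne_zero.2 hr.ne'), ← ofReal_log hr.le]
  push_cast
  ring_nf

theorem norm_integral_ofReal_div_cpow_I_mul_le {A B a b t : ℝ} (hAB : A ≤ B)
    (ha : 0 < A + a) (hb : 0 < A + b) (ht : t ≠ 0) (hab : a ≠ b) :
    ‖∫ x in A..B, (((x + a) / (x + b) : ℝ) : ℂ) ^ (I * t)‖ ≤
      ((A + a) * (A + b) + (B + a) * (B + b) + (2 * B + a + b) * (B - A)) / |t * (b - a)| := by
  have hpos : ∀ x ∈ uIcc A B, 0 < x + a ∧ 0 < x + b := fun x hx => by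
    rw [uIcc_of_le hAB] at hx
    constructor <;> linarith [hx.1]
  set φ : ℝ → ℝ := fun x => t * (Real.log (x + a) - Real.log (x + b))
  set h : ℝ → ℝ := fun x => (x + a) * (x + b) / (t * (b - a))
  have hφ : ∀ x ∈ uIcc A B, HasDerivAt φ (t * (1 / (x + a) - 1 / (x + b))) x := fun x hx =>
    ((((hasDerivAt_id x).add_const a).log (hpos x hx).1.ne').sub
      (((hasDerivAt_id x).add_const b).log (hpos x hx).2.ne')).const_mul t
  have hh : ∀ x ∈ uIcc A B, HasDerivAt h ((2 * x + a + b) / (t * (b - a))) x := fun x _ =>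
    ((((hasDerivAt_id x).add_const a).mul ((hasDerivAt_id x).add_const b)).div_const
      (t * (b - a))).congr_deriv (by simp only [id]; ring)
  have hφh : ∀ x ∈ uIcc A B, t * (1 / (x + a) - 1 / (x + b)) * h x = 1 := fun x hx => by
    have := hpos x hx
    simp only [h]
    field_simp [this.1.ne', this.2.ne', sub_ne_zero.2 hab.symm]
    ring
  have habs : ∀ x ∈ uIcc A B, |h x| = (x + a) * (x + b) / |t * (b - a)| := fun x hx => by
    rw [abs_div, abs_of_pos (mul_pos (hpos x hx).1 (hpos x hx).2)]
  have hM : ∀ x ∈ Ioc A B, |(2 * x + a + b) / (t * (b - a))| ≤ (2 * B + a + b) / |t * (b - a)| :=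
    fun x hx => by
      rw [abs_div, abs_of_pos (by linarith [hx.1])]
      gcongr
      exact hx.2
  have hEq : EqOn (fun x : ℝ => (((x + a) / (x + b) : ℝ) : ℂ) ^ (I * t))
      (fun x => exp (φ x * I)) (uIcc A B) := fun x hx => by
    simp only [φ, ofReal_cpow_I_mul_eq_exp (div_pos (hpos x hx).1 (hpos x hx).2),
      Real.log_div (hpos x hx).1.ne' (hpos x hx).2.ne']
  rw [intervalIntegral.integral_congr hEq]
  refine (norm_integral_exp_ofReal_mul_I_le hAB hφ hh
    ((by fun_prop : Continuous fun x => (2 * x + a + b) / (t * (b - a))).intervalIntegrable A B)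
    hφh hM).trans_eq ?_
  rw [habs A left_mem_uIcc, habs B right_mem_uIcc]
  ring

/-- Oscillatory integral bound for a linear fractional phase:
`|∫_A^B ((x+v₁)/(x+v₄))^{it} dx| ≤ C(K) V² / (t |v₁ - v₄|)`. -/
theorem statement_7 :
    ∀ K : ℝ, 0 < K → ∃ C : ℝ, 0 < C ∧
      ∀ (A B V t : ℝ) (v₁ v₄ : ℤ),
        0 ≤ A → A < B → B ≤ K * V → 1 ≤ V → 1 ≤ t →
        V / 2 < (v₁ : ℝ) → (v₁ : ℝ) ≤ V →
        V / 2 < (v₄ : ℝ) → (v₄ : ℝ) ≤ V →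
        v₁ ≠ v₄ →
        ‖∫ x in A..B,
            (((x + (v₁ : ℝ)) / (x + (v₄ : ℝ)) : ℝ) : ℂ) ^ (Complex.I * t)‖
          ≤ C * V ^ 2 / (t * (|(v₁ - v₄ : ℤ)| : ℝ)) := by
  intro K hK
  refine ⟨4 * (K + 1) ^ 2, by positivity, ?_⟩
  intro A B V t v₁ v₄ hA hAB hBK hV ht h₁l h₁u h₄l h₄u hne
  have hne' : (v₁ : ℝ) ≠ v₄ := Int.cast_injective.ne hne
  have hden : |t * ((v₄ : ℝ) - v₁)| = t * (|(v₁ - v₄ : ℤ)| : ℝ) := by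
    rw [abs_mul, abs_of_pos (by linarith), abs_sub_comm]
    push_cast
    rfl
  refine (norm_integral_ofReal_div_cpow_I_mul_le hAB.le (by linarith) (by linarith)
    (by positivity) hne').trans ?_
  rw [hden]
  gcongr
  nlinarith
end
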